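/- In the setting of the Pisot-form system (1/λ Pisot of degree s+1, relatively prime integers (n_k), μ_k ∈ T(1/λ), p ∈ C_N with Σ_j p_j n_j > 0), suppose the maps φ_k(x) = λ^{n_k} x + μ_k have a common fixed point c. Then there exists a rational number p/q such that λ^{−n} c mod 1 converges to p/q in 𝕋 as n → +∞; consequently m = δ_{p/q} and 𝓜 = (δ_{p/q})^{⊗(s+1)}. -/

import Mathlib

open MeasureTheory ProbabilityTheory Filter Finset IntermediateField

noncomputable section

/-- A Pisot number. -/
def IsPisot (θ : ℝ) : Prop :=
  1 < θ ∧ IsIntegral ℤ θ ∧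
    ∀ z : ℂ, (Polynomial.aeval z) (minpoly ℚ θ) = 0 → z ≠ (θ : ℂ) → ‖z‖ < 1

/-- The set `T(θ) = {α ∈ ℚ(θ) : Tr_θ(θ^n α) ∈ ℤ for all large n}`. -/
def traceSet (θ : ℝ) : Set ℝ :=
  {α | ∃ hα : α ∈ ℚ⟮θ⟯, ∃ N : ℕ, ∀ n ≥ N, ∃ z : ℤ,
    Algebra.trace ℚ ℚ⟮θ⟯
      ((⟨θ, IntermediateField.mem_adjoin_simple_self ℚ θ⟩ : ℚ⟮θ⟯) ^ n * ⟨α, hα⟩) = (z : ℚ)}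

/-- The cocycle `S_l` associated to the sequence `(n (ε i))_{i ∈ ℤ}`. -/
def cocy {N : ℕ} {Ω : Type*} (n : Fin (N + 1) → ℤ) (ε : ℤ → Ω → Fin (N + 1))
    (l : ℤ) (ω : Ω) : ℤ :=
  if 0 ≤ l then ∑ i ∈ Finset.range l.toNat, n (ε (i : ℤ) ω)
  else -∑ i ∈ Finset.range (-l).toNat, n (ε (-(i : ℤ) - 1) ω)

/-!
Write `θ = λ⁻¹`. Some `n k₀` is nonzero, so the common fixed point `c = μ k₀ / (1 - λ^{n k₀})`
lies in `ℚ(θ)`. Since `θ` is Pisot, `Tr(θ^j c) - θ^j c → 0`, and since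
`θ^j μ_k = θ^j c - θ^{j - n_k} c`, the hypothesis `μ_k ∈ T(θ)` makes `Tr(θ^j c) - Tr(θ^{j - n_k} c)`
an integer for large `j`. The eventual periods of `j ↦ Tr(θ^j c) mod 1` form a subgroup of `ℤ`
containing every `n_k`, hence containing `1`: so `Tr(θ^j c) mod 1` is eventually a constant
rational `q`, and `θ^j c → q` in `𝕋`.

The partial sums defining `X` telescope to `c - c λ^{S_L}`. By the second Borel–Cantelli lemma
`n(ε_l) ≠ 0` infinitely often almost surely, so the integers `S_L` are not eventually constant and
`λ^{S_L}` cannot converge to a positive limit; hence `X = c` almost surely. The laws in the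
definitions of `m` and `𝓜` are then Dirac masses at points converging to `q` and `(q, …, q)`.
-/

def eventualPeriods {G : Type*} [AddGroup G] (f : ℤ → G) : AddSubgroup ℤ where
  carrier := {k | ∀ᶠ j in atTop, f (j - k) = f j}
  zero_mem' := by simp
  add_mem' {a b} ha hb := by
    filter_upwards [ha, tendsto_atTop_add_const_right atTop (-a) tendsto_id hb] with j hja hjb
    simpa [← sub_eq_add_neg, sub_sub, hja] using hjb
  neg_mem' {a} ha := by
    filter_upwards [tendsto_atTop_add_const_right atTop a tendsto_id ha] with j hj
    simpa using hj.symm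

theorem eventually_eq_of_one_mem_eventualPeriods {G : Type*} [AddGroup G] {f : ℤ → G}
    (h : 1 ∈ eventualPeriods f) : ∃ B, ∀ j, B ≤ j → f j = f B := by
  obtain ⟨B, hB⟩ := eventually_atTop.1 h
  refine ⟨B, fun j hj => ?_⟩
  induction j, hj using Int.leInduction with
  | base => rfl
  | succ i hi ih => rw [← ih, ← hB (i + 1) (by omega), add_sub_cancel_right]

theorem one_mem_of_gcd_eq_one {ι : Type*} {s : Finset ι} {n : ι → ℤ} (hgcd : s.gcd n = 1)
    {H : AddSubgroup ℤ} (hn : ∀ i ∈ s, n i ∈ H) : (1 : ℤ) ∈ H := by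
  obtain ⟨g, hg⟩ := s.gcd_eq_sum_mul n
  rw [← hgcd, hg]
  exact H.sum_mem fun i hi => by simpa [mul_comm] using H.zsmul_mem (hn i hi) (g i)

theorem exists_ne_zero_of_gcd_eq_one {ι : Type*} {s : Finset ι} {n : ι → ℤ}
    (hgcd : s.gcd n = 1) : ∃ i ∈ s, n i ≠ 0 := by
  by_contra! h
  rw [Finset.gcd_eq_zero_iff.2 h] at hgcd
  exact zero_ne_one hgcd

section Pisot

variable {θ : ℝ}

theorem IsPisot.norm_lt_one (hθ : IsPisot θ) (σ : ℚ⟮θ⟯ →ₐ[ℚ] ℂ)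
    (hσ : σ (AdjoinSimple.gen ℚ θ) ≠ θ) : ‖σ (AdjoinSimple.gen ℚ θ)‖ < 1 :=
  hθ.2.2 _ (by rw [← minpoly_gen]; exact minpoly.aeval_algHom _ σ _) hσ

theorem IsPisot.tendsto_trace_sub (hθ : IsPisot θ) (x : ℚ⟮θ⟯) :
    Tendsto (fun j : ℕ =>
      (Algebra.trace ℚ ℚ⟮θ⟯ (AdjoinSimple.gen ℚ θ ^ j * x) : ℝ) - θ ^ j * x) atTop (nhds 0) := by
  classical
  have : FiniteDimensional ℚ ℚ⟮θ⟯ := adjoin.finiteDimensional hθ.2.1.tower_top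
  let ι : ℚ⟮θ⟯ →ₐ[ℚ] ℂ := (Complex.ofRealAm.restrictScalars ℚ).comp (val _)
  have hι : ∀ σ ∈ univ.erase ι, σ (AdjoinSimple.gen ℚ θ) ≠ θ := fun σ hσ heq =>
    ne_of_mem_erase hσ <| adjoin_algHom_ext ℚ (φ₁ := σ) (φ₂ := ι) fun y hy => by
      obtain rfl := Set.mem_singleton_iff.1 hy
      exact heq
  have hsum : ∀ j : ℕ, (((Algebra.trace ℚ ℚ⟮θ⟯ (AdjoinSimple.gen ℚ θ ^ j * x) : ℝ) -
      θ ^ j * x : ℝ) : ℂ) = ∑ σ ∈ univ.erase ι, σ (AdjoinSimple.gen ℚ θ) ^ j * σ x := by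
    intro j
    have := trace_eq_sum_embeddings (K := ℚ) (E := ℂ) (x := AdjoinSimple.gen ℚ θ ^ j * x)
    simp only [map_mul, map_pow] at this
    rw [← sum_erase_add _ _ (mem_univ ι)] at this
    rw [eq_sub_of_add_eq this.symm]
    push_cast
    rfl
  rw [← tendsto_ofReal_iff, Complex.ofReal_zero]
  simp_rw [hsum]
  simpa using tendsto_finsetSum _ fun σ hσ =>
    (tendsto_pow_atTop_nhds_zero_of_norm_lt_one (hθ.norm_lt_one σ (hι σ hσ))).mul_const (σ x)

def traceModOne (θ : ℝ) (x : ℚ⟮θ⟯) (j : ℤ) : AddCircle (1 : ℝ) :=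
  ((Algebra.trace ℚ ℚ⟮θ⟯ (AdjoinSimple.gen ℚ θ ^ j * x) : ℚ) : ℝ)

theorem mem_eventualPeriods_traceModOne (hθ : θ ≠ 0) (x : ℚ⟮θ⟯) (k : ℤ)
    (hk : ((x - AdjoinSimple.gen ℚ θ ^ (-k) * x : ℚ⟮θ⟯) : ℝ) ∈ traceSet θ) :
    k ∈ eventualPeriods (traceModOne θ x) := by
  have hgen : AdjoinSimple.gen ℚ θ ≠ 0 := fun h => hθ (congrArg Subtype.val h)
  obtain ⟨hα, B, hB⟩ := hk
  filter_upwards [eventually_ge_atTop (B : ℤ)] with j hj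
  obtain ⟨z, hz⟩ := hB j.toNat (by omega)
  have htr : Algebra.trace ℚ ℚ⟮θ⟯ (AdjoinSimple.gen ℚ θ ^ j * x) -
      Algebra.trace ℚ ℚ⟮θ⟯ (AdjoinSimple.gen ℚ θ ^ (j - k) * x) = z := by
    rw [← hz, ← map_sub]
    change _ = Algebra.trace ℚ ℚ⟮θ⟯
      (AdjoinSimple.gen ℚ θ ^ j.toNat * (x - AdjoinSimple.gen ℚ θ ^ (-k) * x))
    rw [← zpow_natCast, Int.toNat_of_nonneg (by omega), mul_sub, ← mul_assoc, ← zpow_add₀ hgen,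
      ← sub_eq_add_neg]
  rw [traceModOne, traceModOne, eq_comm, ← sub_eq_zero, ← AddCircle.coe_sub, ← Rat.cast_sub, htr,
    AddCircle.coe_eq_zero_iff]
  exact ⟨z, by simp⟩

theorem IsPisot.exists_tendsto_pow_mul (hθ : IsPisot θ) (x : ℚ⟮θ⟯)
    (h : 1 ∈ eventualPeriods (traceModOne θ x)) :
    ∃ q : ℚ, Tendsto (fun j : ℕ => ((θ ^ j * x : ℝ) : AddCircle (1 : ℝ))) atTop (nhds (q : ℝ)) := by
  obtain ⟨B, hB⟩ := eventually_eq_of_one_mem_eventualPeriods h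
  refine ⟨Algebra.trace ℚ ℚ⟮θ⟯ (AdjoinSimple.gen ℚ θ ^ B * x), ?_⟩
  have hdiff : Tendsto (fun j : ℕ =>
      θ ^ j * x - (Algebra.trace ℚ ℚ⟮θ⟯ (AdjoinSimple.gen ℚ θ ^ j * x) : ℝ)) atTop (nhds 0) := by
    simpa using (hθ.tendsto_trace_sub x).neg
  have hlim : Tendsto (fun j : ℕ => ((θ ^ j * x -
      (Algebra.trace ℚ ℚ⟮θ⟯ (AdjoinSimple.gen ℚ θ ^ j * x) : ℝ) : ℝ) : AddCircle (1 : ℝ)) +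
        traceModOne θ x B) atTop (nhds (traceModOne θ x B)) := by
    simpa using (((AddCircle.continuous_mk' (1 : ℝ)).tendsto 0).comp hdiff).add_const _
  refine hlim.congr' ?_
  filter_upwards [eventually_ge_atTop B.toNat] with j hj
  rw [← hB j (by omega), traceModOne, AddCircle.coe_sub, zpow_natCast, sub_add_cancel]

end Pisot

theorem exists_tendsto_inv_pow_mul_of_isFixedPt {ι : Type*} [Fintype ι] {lam : ℝ}
    (hlam : 0 < lam) (hPisot : IsPisot lam⁻¹) {n : ι → ℤ} (hgcd : univ.gcd n = 1)
    {μ : ι → ℝ} (hμ : ∀ k, μ k ∈ traceSet lam⁻¹) {c : ℝ} (hfix : ∀ k, lam ^ n k * c + μ k = c) :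
    ∃ q : ℚ, Tendsto (fun j : ℕ => ((lam⁻¹ ^ j * c : ℝ) : AddCircle (1 : ℝ))) atTop
      (nhds (q : ℝ)) := by
  have hlam1 : lam < 1 := (one_lt_inv_iff₀.1 hPisot.1).2
  obtain ⟨k₀, -, hk₀⟩ := exists_ne_zero_of_gcd_eq_one hgcd
  have hlamK : lam ∈ ℚ⟮lam⁻¹⟯ := by
    simpa using inv_mem (mem_adjoin_simple_self ℚ lam⁻¹)
  have hc : c ∈ ℚ⟮lam⁻¹⟯ := by
    have hne : 1 - lam ^ n k₀ ≠ 0 := by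
      rw [sub_ne_zero, ne_comm, Ne, zpow_eq_one_iff_right₀ hlam.le hlam1.ne]
      exact hk₀
    rw [show c = μ k₀ / (1 - lam ^ n k₀) by field_simp; linarith [hfix k₀]]
    exact div_mem (hμ k₀).1 (sub_mem (one_mem _) (zpow_mem hlamK _))
  have hper : ∀ k, n k ∈ eventualPeriods (traceModOne lam⁻¹ ⟨c, hc⟩) := fun k =>
    mem_eventualPeriods_traceModOne (inv_ne_zero hlam.ne') _ _ <| by
      convert hμ k using 1
      have hpow : ((AdjoinSimple.gen ℚ lam⁻¹ ^ (-n k) : ℚ⟮lam⁻¹⟯) : ℝ) = lam⁻¹ ^ (-n k) :=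
        map_zpow₀ (algebraMap ℚ⟮lam⁻¹⟯ ℝ) _ _
      push_cast [hpow, inv_zpow', neg_neg]
      linarith [hfix k]
  exact hPisot.exists_tendsto_pow_mul _ (one_mem_of_gcd_eq_one hgcd fun k _ => hper k)

theorem sum_range_mul_zpow_partialSum_of_isFixedPt {K ι : Type*} [Field K] {lam : K}
    (hlam : lam ≠ 0) {n : ι → ℤ} {μ : ι → K} {c : K} (hfix : ∀ k, lam ^ n k * c + μ k = c)
    (e : ℕ → ι) (L : ℕ) :
    ∑ l ∈ range L, μ (e l) * lam ^ (∑ i ∈ range l, n (e i)) =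
      c - c * lam ^ (∑ i ∈ range L, n (e i)) := by
  induction L with
  | zero => simp
  | succ L ih =>
    rw [sum_range_succ, ih, sum_range_succ, zpow_add₀ hlam, eq_sub_of_add_eq' (hfix (e L))]
    ring

theorem cocy_natCast {N : ℕ} {Ω : Type*} (n : Fin (N + 1) → ℤ) (ε : ℤ → Ω → Fin (N + 1))
    (l : ℕ) (ω : Ω) : cocy n ε l ω = ∑ i ∈ range l, n (ε i ω) := by
  simp [cocy]

theorem eventually_eq_zero_of_tendsto_intCast {u : ℕ → ℤ}
    (h : Tendsto (fun L => (u L : ℝ)) atTop (nhds 0)) : ∀ᶠ L in atTop, u L = 0 := by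
  have : Tendsto u atTop (nhds 0) :=
    Int.isClosedEmbedding_coe_real.tendsto_nhds_iff.2 (by simpa [Function.comp_def] using h)
  rwa [nhds_discrete, tendsto_pure] at this

theorem eventually_succ_eq_of_tendsto_zpow {lam a : ℝ} (hlam : 0 < lam) (hlam1 : lam ≠ 1)
    (ha : 0 < a) {S : ℕ → ℤ} (h : Tendsto (fun L => lam ^ S L) atTop (nhds a)) :
    ∀ᶠ L in atTop, S (L + 1) = S L := by
  have hlog : Real.log lam ≠ 0 := Real.log_ne_zero_of_pos_of_ne_one hlam hlam1
  have hS : Tendsto (fun L => (S L : ℝ)) atTop (nhds (Real.log a / Real.log lam)) := by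
    refine (((Real.continuousAt_log ha.ne').tendsto.comp h).div_const _).congr fun L => ?_
    simp [Real.log_zpow, hlog]
  have hdiff : Tendsto (fun L => ((S (L + 1) - S L : ℤ) : ℝ)) atTop (nhds 0) := by
    simpa using (hS.comp (tendsto_add_atTop_nat 1)).sub hS
  filter_upwards [eventually_eq_zero_of_tendsto_intCast hdiff] with L hL
  omega

theorem ae_frequently_mem_of_iIndepFun {Ω α : Type*} [MeasurableSpace Ω] [MeasurableSpace α]
    {P : Measure Ω} {ε : ℕ → Ω → α} (hmeas : ∀ l, Measurable (ε l)) (hindep : iIndepFun ε P)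
    {A : Set α} (hA : MeasurableSet A) {r : ENNReal} (hr : r ≠ 0) (hlaw : ∀ l, P (ε l ⁻¹' A) = r) :
    ∀ᵐ ω ∂P, ∃ᶠ l in atTop, ε l ω ∈ A := by
  have hsets : iIndepSet (fun l => ε l ⁻¹' A) P :=
    (iIndepSet_iff_meas_biInter fun l => hmeas l hA).2 fun s =>
      hindep.meas_biInter fun l _ => ⟨A, hA, rfl⟩
  have hsum : ∑' l, P (ε l ⁻¹' A) = ⊤ := by
    simp_rw [hlaw]
    exact ENNReal.tsum_const_eq_top_of_ne_zero hr
  have := hsets.isProbabilityMeasure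
  have hmeas_limsup := MeasurableSet.measurableSet_limsup fun l => hmeas l hA
  filter_upwards [(ae_mem_iff_measure_eq hmeas_limsup.nullMeasurableSet).2
    ((measure_limsup_eq_one (fun l => hmeas l hA) hsets hsum).trans measure_univ.symm)]
    with ω hω
  exact mem_limsup_iff_frequently_mem.1 hω

theorem eq_of_tendsto_sub_mul_zpow {lam c x : ℝ} (hlam : 0 < lam) (hlam1 : lam ≠ 1) {S : ℕ → ℤ}
    (hS : ∃ᶠ L in atTop, S (L + 1) ≠ S L)
    (h : Tendsto (fun L => c - c * lam ^ S L) atTop (nhds x)) : x = c := by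
  by_contra hxc
  have hc : c ≠ 0 := by
    rintro rfl
    exact hxc (tendsto_nhds_unique h (by simp))
  have hpow : Tendsto (fun L => lam ^ S L) atTop (nhds ((c - x) / c)) :=
    ((tendsto_const_nhds.sub h).div_const c).congr fun L => by field_simp; ring
  have hpos : 0 < (c - x) / c := by
    refine lt_of_le_of_ne (ge_of_tendsto' hpow fun L => (zpow_pos hlam _).le) ?_
    simpa [sub_eq_zero, eq_comm, hc] using hxc
  obtain ⟨L, hne, heq⟩ :=
    (hS.and_eventually (eventually_succ_eq_of_tendsto_zpow hlam hlam1 hpos hpow)).exists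
  exact hne heq

theorem ae_eq_of_tendsto_sum_of_isFixedPt {N : ℕ} {Ω : Type*} [MeasurableSpace Ω]
    {P : Measure Ω} {lam c : ℝ} (hlam : 0 < lam) (hlam1 : lam ≠ 1) {n : Fin (N + 1) → ℤ}
    {μ : Fin (N + 1) → ℝ} (hfix : ∀ k, lam ^ n k * c + μ k = c) {ε : ℤ → Ω → Fin (N + 1)}
    (hmeas : ∀ l, Measurable (ε l)) (hindep : iIndepFun ε P) {k₀ : Fin (N + 1)}
    (hk₀ : n k₀ ≠ 0) {r : ENNReal} (hr : r ≠ 0) (hlaw : ∀ l, P {ω | ε l ω = k₀} = r)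
    {X : Ω → ℝ} (hX : ∀ᵐ ω ∂P, Tendsto (fun L : ℕ =>
        ∑ l ∈ range L, μ (ε l ω) * lam ^ cocy n ε l ω) atTop (nhds (X ω))) :
    ∀ᵐ ω ∂P, X ω = c := by
  have hfreq : ∀ᵐ ω ∂P, ∃ᶠ l : ℕ in atTop, ε l ω ∈ ({k₀} : Set (Fin (N + 1))) :=
    ae_frequently_mem_of_iIndepFun (ε := fun l : ℕ => ε l) (fun l => hmeas l)
      (hindep.precomp Nat.cast_injective) (measurableSet_singleton k₀) hr fun l => hlaw l
  filter_upwards [hX, hfreq] with ω hXω hω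
  refine eq_of_tendsto_sub_mul_zpow hlam hlam1 (S := fun L => ∑ i ∈ range L, n (ε i ω))
    (hω.mono fun l hl => by simp_all [sum_range_succ]) ?_
  simpa only [cocy_natCast, sum_range_mul_zpow_partialSum_of_isFixedPt hlam.ne' hfix] using hXω

theorem MeasureTheory.Measure.pi_dirac {ι : Type*} [Fintype ι] {α : ι → Type*} [∀ i, MeasurableSpace (α i)]
    (x : ∀ i, α i) : Measure.pi (fun i => Measure.dirac (x i)) = Measure.dirac x := by
  refine Measure.pi_eq fun s hs => ?_
  classical
  simp only [Measure.dirac_apply' _ (MeasurableSet.univ_pi hs), Measure.dirac_apply' _ (hs _),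
    Set.indicator, Set.mem_univ_pi, Pi.one_apply]
  simp [Finset.prod_ite_zero]

theorem eq_dirac_of_tendsto_integral {α : Type*} [MeasurableSpace α] [TopologicalSpace α]
    [HasOuterApproxClosed α] [BorelSpace α] (m : Measure α) [IsFiniteMeasure m]
    {y : ℕ → α} {a : α} (hy : Tendsto y atTop (nhds a))
    (h : ∀ f : C(α, ℝ), Tendsto (fun q => f (y q)) atTop (nhds (∫ z, f z ∂m))) :
    m = Measure.dirac a := by
  refine ext_of_forall_integral_eq_of_IsFiniteMeasure fun f => ?_
  rw [integral_dirac' _ _ f.continuous.stronglyMeasurable]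
  exact tendsto_nhds_unique (h f.toContinuousMap) ((f.continuous.tendsto a).comp hy)

theorem integral_comp_of_ae_eq_const {Ω α : Type*} [MeasurableSpace Ω] (P : Measure Ω)
    [IsProbabilityMeasure P] {X : Ω → α} {c : α} (hX : ∀ᵐ ω ∂P, X ω = c) (F : α → ℝ) :
    ∫ ω, F (X ω) ∂P = F c := by
  rw [integral_congr_ae (hX.mono fun ω hω => congrArg F hω), integral_const, probReal_univ,
    one_smul]

theorem stmt11_general {N : ℕ} (lam : ℝ) (hlam : 0 < lam)
    (hPisot : IsPisot lam⁻¹) (s : ℕ)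
    (n : Fin (N + 1) → ℤ) (hgcd : Finset.univ.gcd n = 1)
    (μ : Fin (N + 1) → ℝ) (hμ : ∀ k, μ k ∈ traceSet lam⁻¹)
    (c : ℝ) (hfix : ∀ k, lam ^ (n k) * c + μ k = c)
    (p : Fin (N + 1) → ℝ) (hp : ∀ j, 0 < p j)
    (Ω : Type*) [MeasureSpace Ω] [IsProbabilityMeasure (ℙ : Measure Ω)]
    (ε : ℤ → Ω → Fin (N + 1)) (hmeas : ∀ l, Measurable (ε l))
    (hindep : iIndepFun ε ℙ)
    (hlaw : ∀ l k, (ℙ : Measure Ω) {ω | ε l ω = k} = ENNReal.ofReal (p k))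
    (X : Ω → ℝ)
    (hX : ∀ᵐ ω ∂ℙ, Tendsto (fun L : ℕ =>
        ∑ l ∈ Finset.range L, μ (ε (l : ℤ) ω) * lam ^ (cocy n ε (l : ℤ) ω))
      atTop (nhds (X ω)))
    -- `m` is the weak limit of the laws of `λ^{-n} X mod 1` :
    (m : Measure (AddCircle (1 : ℝ))) [IsProbabilityMeasure m]
    (hm : ∀ f : C(AddCircle (1 : ℝ), ℝ),
      Tendsto (fun q : ℕ => ∫ ω, f ((lam⁻¹ ^ q * X ω : ℝ) : AddCircle (1 : ℝ)) ∂ℙ)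
        atTop (nhds (∫ z, f z ∂m)))
    -- `𝓜` is the weak limit of the laws of `λ^{-n}(X, λ^{-1}X, …, λ^{-s}X) mod ℤ^{s+1}` :
    (M : Measure (Fin (s + 1) → AddCircle (1 : ℝ))) [IsProbabilityMeasure M]
    (hM : ∀ f : C((Fin (s + 1) → AddCircle (1 : ℝ)), ℝ),
      Tendsto (fun q : ℕ => ∫ ω, f (fun u =>
          ((lam⁻¹ ^ q * (lam⁻¹ ^ (u : ℕ) * X ω) : ℝ) : AddCircle (1 : ℝ))) ∂ℙ)
        atTop (nhds (∫ z, f z ∂M))) :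
    ∃ q : ℚ,
      Tendsto (fun nn : ℕ => ((lam⁻¹ ^ nn * c : ℝ) : AddCircle (1 : ℝ)))
        atTop (nhds (((q : ℝ) : AddCircle (1 : ℝ)))) ∧
      m = Measure.dirac (((q : ℝ) : AddCircle (1 : ℝ))) ∧
      M = Measure.pi (fun _ => Measure.dirac (((q : ℝ) : AddCircle (1 : ℝ)))) := by
  obtain ⟨q, hq⟩ := exists_tendsto_inv_pow_mul_of_isFixedPt hlam hPisot hgcd hμ hfix
  obtain ⟨k₀, -, hk₀⟩ := exists_ne_zero_of_gcd_eq_one hgcd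
  have hXc : ∀ᵐ ω ∂ℙ, X ω = c :=
    ae_eq_of_tendsto_sum_of_isFixedPt hlam (one_lt_inv_iff₀.1 hPisot.1).2.ne hfix hmeas hindep
      hk₀ (ENNReal.ofReal_pos.2 (hp k₀)).ne' (fun l => hlaw l k₀) hX
  have hqM : Tendsto (fun j : ℕ => fun u : Fin (s + 1) =>
      ((lam⁻¹ ^ j * (lam⁻¹ ^ (u : ℕ) * c) : ℝ) : AddCircle (1 : ℝ))) atTop
      (nhds fun _ => ((q : ℝ) : AddCircle (1 : ℝ))) :=
    tendsto_pi_nhds.2 fun u => (hq.comp (tendsto_add_atTop_nat u)).congr fun j => by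
      simp only [Function.comp_apply, pow_add, mul_assoc]
  refine ⟨q, hq, eq_dirac_of_tendsto_integral m hq fun f => (hm f).congr fun j =>
    integral_comp_of_ae_eq_const ℙ hXc fun x => f ((lam⁻¹ ^ j * x : ℝ) : AddCircle (1 : ℝ)), ?_⟩
  rw [Measure.pi_dirac]
  exact eq_dirac_of_tendsto_integral M hqM fun f => (hM f).congr fun j =>
    integral_comp_of_ae_eq_const ℙ hXc fun x => f fun u =>
      ((lam⁻¹ ^ j * (lam⁻¹ ^ (u : ℕ) * x) : ℝ) : AddCircle (1 : ℝ))

/-- (Theorem 2 ii), second part). In the Pisot-form setting, if the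
maps `φ k x = λ^{n k} x + μ k` have a common fixed point `c`, then there is a rational
`q` with `λ^{-n} c mod 1 → q` in `𝕋`; consequently `m = δ_q` and
`𝓜 = (δ_q)^{⊗(s+1)}`. -/
theorem stmt11 {N : ℕ} (hN : 1 ≤ N) (lam : ℝ) (hlam : 0 < lam)
    (hPisot : IsPisot lam⁻¹) (s : ℕ) (hdeg : (minpoly ℚ lam⁻¹).natDegree = s + 1)
    (n : Fin (N + 1) → ℤ) (hgcd : Finset.univ.gcd n = 1)
    (μ : Fin (N + 1) → ℝ) (hμ : ∀ k, μ k ∈ traceSet lam⁻¹)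
    (c : ℝ) (hfix : ∀ k, lam ^ (n k) * c + μ k = c)
    (p : Fin (N + 1) → ℝ) (hp : ∀ j, 0 < p j) (hp1 : ∑ j, p j = 1)
    (hdrift : 0 < ∑ j, p j * (n j : ℝ))
    (Ω : Type*) [MeasureSpace Ω] [IsProbabilityMeasure (ℙ : Measure Ω)]
    (ε : ℤ → Ω → Fin (N + 1)) (hmeas : ∀ l, Measurable (ε l))
    (hindep : iIndepFun ε ℙ)
    (hlaw : ∀ l k, (ℙ : Measure Ω) {ω | ε l ω = k} = ENNReal.ofReal (p k))
    (X : Ω → ℝ) (hXmeas : Measurable X)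
    (hX : ∀ᵐ ω ∂ℙ, Tendsto (fun L : ℕ =>
        ∑ l ∈ Finset.range L, μ (ε (l : ℤ) ω) * lam ^ (cocy n ε (l : ℤ) ω))
      atTop (nhds (X ω)))
    -- `m` is the weak limit of the laws of `λ^{-n} X mod 1` :
    (m : Measure (AddCircle (1 : ℝ))) [IsProbabilityMeasure m]
    (hm : ∀ f : C(AddCircle (1 : ℝ), ℝ),
      Tendsto (fun q : ℕ => ∫ ω, f ((lam⁻¹ ^ q * X ω : ℝ) : AddCircle (1 : ℝ)) ∂ℙ)
        atTop (nhds (∫ z, f z ∂m)))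
    -- `𝓜` is the weak limit of the laws of `λ^{-n}(X, λ^{-1}X, …, λ^{-s}X) mod ℤ^{s+1}` :
    (M : Measure (Fin (s + 1) → AddCircle (1 : ℝ))) [IsProbabilityMeasure M]
    (hM : ∀ f : C((Fin (s + 1) → AddCircle (1 : ℝ)), ℝ),
      Tendsto (fun q : ℕ => ∫ ω, f (fun u =>
          ((lam⁻¹ ^ q * (lam⁻¹ ^ (u : ℕ) * X ω) : ℝ) : AddCircle (1 : ℝ))) ∂ℙ)
        atTop (nhds (∫ z, f z ∂M))) :
    ∃ q : ℚ,
      Tendsto (fun nn : ℕ => ((lam⁻¹ ^ nn * c : ℝ) : AddCircle (1 : ℝ)))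
        atTop (nhds (((q : ℝ) : AddCircle (1 : ℝ)))) ∧
      m = Measure.dirac (((q : ℝ) : AddCircle (1 : ℝ))) ∧
      M = Measure.pi (fun _ => Measure.dirac (((q : ℝ) : AddCircle (1 : ℝ)))) :=
  stmt11_general lam hlam hPisot s n hgcd μ hμ c hfix p hp Ω ε hmeas hindep hlaw X hX m hm M hM
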